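/- arXiv:2309.09639 — 5 statements merged into one kernel-verified Lean document; each statement's English description precedes it below -/
import Mathlib

section
/- There exists an open Euclidean knight's tour on C(3,5) = {0,1,2}^5: a sequence of all 243 vertices, each visited exactly once, in which consecutive vertices are at Euclidean distance √5. Hence the minimum k for which a Euclidean knight's tour on {0,1,2}^k exists is k = 5. -/
/-- A (possibly open) Euclidean knight's tour on `{0,1,2}^k`: a bijective enumeration of
all `3^k` vertices in which every pair of consecutive vertices is at squared Euclidean
distance `5`. -/
def EuclideanKnightTourC3 (k : ℕ) : Prop :=
  ∃ f : Fin (3 ^ k) → (Fin k → Fin 3), Function.Bijective f ∧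
    ∀ (i : ℕ) (h : i + 1 < 3 ^ k),
      ∑ j, ((f ⟨i, Nat.lt_of_succ_lt h⟩ j : ℤ) - (f ⟨i + 1, h⟩ j : ℤ)) ^ 2 = 5

set_option maxRecDepth 100000

def tourL : List ℕ := [34, 195, 60, 55, 216, 223, 218, 235, 240, 51, 72, 79, 214, 207, 190, 27, 46, 95, 120, 149, 94, 29, 62, 197, 148, 209, 74, 53, 242, 227, 164, 169, 186, 181, 188, 25, 8, 1, 20, 45, 198, 213, 234, 231, 42, 63, 18, 171, 226, 65, 70, 205, 200, 233, 44, 37, 52, 241, 78, 73, 208, 215, 80, 47, 236, 121, 224, 179, 182, 239, 228, 93, 122, 147, 196, 191, 56, 35, 6, 61, 28, 217, 162, 183, 168, 189, 222, 33, 54, 69, 204, 15, 0, 163, 2, 7, 26, 19, 24, 187, 170, 177, 172, 11, 16, 9, 180, 225, 36, 103, 112, 173, 130, 17, 10, 43, 38, 71, 206, 139, 156, 199, 64, 111, 232, 131, 178, 113, 84, 129, 104, 99, 128, 161, 154, 135, 140, 157, 102, 85, 138, 159, 142, 137, 158, 153, 108, 83, 146, 101, 82, 87, 86, 221, 176, 165,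 184, 23, 212, 237, 76, 57, 48, 77, 32, 167, 220, 59, 4, 21, 14, 3, 192, 39, 106, 89, 110, 143, 150, 125, 114, 117, 132, 67, 238, 175, 22, 185, 230, 127, 12, 75, 124, 5, 118, 115, 68, 133, 174, 109, 66, 219, 166, 13, 58, 229, 134, 119, 116, 123, 126, 105, 90, 145, 210, 203, 50, 97, 100, 41, 160, 201, 30, 91, 194, 151, 136, 155, 202, 81, 88, 141, 40, 107, 92, 31, 144, 49, 98, 193, 152, 211, 96]

def invL : List ℕ := [92, 37, 94, 171, 168, 193, 78, 95, 36, 105, 114, 103, 190, 203, 170, 91, 104, 113, 46, 97, 38, 169, 186, 157, 98, 35, 96, 15, 80, 21, 222, 235, 164, 87, 0, 77, 108, 55, 116, 173, 232, 219, 44, 115, 54, 39, 16, 63, 162, 237, 216, 9, 56, 27, 88, 3, 76, 161, 204, 167, 2, 79, 22, 45, 122, 49, 200, 183, 196, 89, 50, 117, 10, 59, 26, 191, 160, 163, 58, 11, 62, 229, 150, 147, 128, 139, 152, 151, 230, 175, 212, 223, 234, 71, 20, 17, 242, 217, 238, 131, 218, 149, 138, 109, 130, 211, 174, 233, 146, 199,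 176, 123, 110, 127, 180, 195, 208, 181, 194, 207, 18, 65, 72, 209, 192, 179, 210, 189, 132, 129, 112, 125, 182, 197, 206, 135, 226, 143, 140, 119, 136, 231, 142, 177, 236, 213, 148, 73, 24, 19, 178, 225, 240, 145, 134, 227, 120, 137, 144, 141, 220, 133, 82, 93, 30, 155, 202, 165, 84, 31, 100, 47, 102, 111, 198, 185, 154, 101, 126, 67, 106, 33, 68, 83, 156, 187, 32, 99, 34, 85, 14, 75, 172, 239, 224, 1, 74, 23, 40, 121, 52, 221, 228, 215, 90, 51, 118, 13, 60, 25, 214, 241, 158, 41, 12, 61, 4, 81, 6, 201, 166, 153, 86, 5, 66, 107, 48, 29, 70, 205, 188, 43, 124, 53, 42, 7, 64, 159, 184, 69, 8, 57, 28]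

def tf : ℕ → ℕ := fun i => tourL.getD i 0

def gf : ℕ → ℕ := fun n => invL.getD n 0

def f5 : Fin 243 → (Fin 5 → Fin 3) :=
  fun i j => ⟨tf i.1 / 3 ^ (j : ℕ) % 3, Nat.mod_lt _ (by norm_num)⟩

lemma gf_tf : ∀ i : Fin 243, gf (tf i.1) = i.1 := by decide

lemma tf_inj : ∀ a b : Fin 243, tf a.1 = tf b.1 → a = b := by
  intro a b h
  have ha := gf_tf a
  rw [h, gf_tf b] at ha
  exact Fin.ext ha.symm

lemma tf_lt : ∀ i : Fin 243, tf i.1 < 243 := by decide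

lemma f5_inj : Function.Injective f5 := by
  intro a b h
  apply tf_inj
  have hd : ∀ j : Fin 5, tf a.1 / 3 ^ (j : ℕ) % 3 = tf b.1 / 3 ^ (j : ℕ) % 3 := by
    intro j
    exact congrArg Fin.val (congrFun h j)
  have h0 := hd ⟨0, by norm_num⟩; have h1 := hd ⟨1, by norm_num⟩
  have h2 := hd ⟨2, by norm_num⟩; have h3 := hd ⟨3, by norm_num⟩
  have h4 := hd ⟨4, by norm_num⟩
  have la := tf_lt a; have lb := tf_lt b
  norm_num at h0 h1 h2 h3 h4
  omega

lemma f5_step : ∀ i : Fin 242,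
    ∑ j : Fin 5, ((f5 ⟨i.1, by omega⟩ j : ℤ) - (f5 ⟨i.1 + 1, by omega⟩ j : ℤ)) ^ 2 = 5 := by
  decide

/-- There exists an open Euclidean knight's tour on `C(3,5) = {0,1,2}^5`; hence the
minimum `k ≥ 1` for which a Euclidean knight's tour on `{0,1,2}^k` exists is `k = 5`. -/
theorem exists_tour_C35_and_min :
    EuclideanKnightTourC3 5 ∧ ∀ k : ℕ, 1 ≤ k → k < 5 → ¬ EuclideanKnightTourC3 k := by
  constructor
  · have hb : Function.Bijective f5 := (Fintype.bijective_iff_injective_and_card f5).mpr ⟨f5_inj, by simp⟩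
    exact ⟨f5, hb, fun i h => f5_step ⟨i, by omega⟩⟩
  · rintro k hk1 hk5 ⟨f, hbij, hstep⟩
    obtain ⟨c, hc⟩ := hbij.2 (fun _ => 1)
    have hbound : ∀ (b : Fin (3 ^ k)),
        ∑ j, ((f c j : ℤ) - (f b j : ℤ)) ^ 2 ≤ (k : ℤ) := by
      intro b
      calc ∑ j, ((f c j : ℤ) - (f b j : ℤ)) ^ 2 ≤ ∑ _j : Fin k, (1 : ℤ) := by
            apply Finset.sum_le_sum
            intro j _
            rw [hc]
            have hlt : (f b j : ℕ) < 3 := (f b j).2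
            have : (f b j : ℤ) = 0 ∨ (f b j : ℤ) = 1 ∨ (f b j : ℤ) = 2 := by
              omega
            rcases this with h | h | h <;> rw [h] <;> norm_num
        _ = (k : ℤ) := by simp
    have hbound' : ∀ (b : Fin (3 ^ k)),
        ∑ j, ((f b j : ℤ) - (f c j : ℤ)) ^ 2 ≤ (k : ℤ) := by
      intro b
      have := hbound b
      calc ∑ j, ((f b j : ℤ) - (f c j : ℤ)) ^ 2
          = ∑ j, ((f c j : ℤ) - (f b j : ℤ)) ^ 2 := by
            apply Finset.sum_congr rfl; intro j _; ring
        _ ≤ (k : ℤ) := this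
    have h3k : 3 ≤ 3 ^ k := by
      calc 3 = 3 ^ 1 := by norm_num
        _ ≤ 3 ^ k := Nat.pow_le_pow_right (by norm_num) hk1
    -- c has a neighbor in the sequence
    rcases Nat.lt_or_ge (c.1 + 1) (3 ^ k) with hlt | hge
    · have h5 := hstep c.1 hlt
      have := hbound ⟨c.1 + 1, hlt⟩
      rw [show (⟨c.1, Nat.lt_of_succ_lt hlt⟩ : Fin (3 ^ k)) = c from rfl] at h5
      have hk : (k : ℤ) < 5 := by exact_mod_cast hk5
      omega
    · -- c is the last index; use predecessor
      have hc1 : 1 ≤ c.1 := by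
        have := c.2
        omega
      have hlt : (c.1 - 1) + 1 < 3 ^ k := by omega
      have h5 := hstep (c.1 - 1) hlt
      have heq : (⟨c.1 - 1 + 1, hlt⟩ : Fin (3 ^ k)) = c := by
        apply Fin.ext; simp; omega
      rw [heq] at h5
      have := hbound' ⟨c.1 - 1, Nat.lt_of_succ_lt hlt⟩
      have hk : (k : ℤ) < 5 := by exact_mod_cast hk5
      omega
end

section
/- There exists a closed walk of length 244 on C(3,5) = {0,1,2}^5 in which every step has squared Euclidean distance 5, every vertex of C(3,5) is visited at least once, exactly one vertex is visited twice, and the walk returns to its starting vertex. In other words, a Euclidean knight can visit every vertex of {0,1,2}^5 and return to its start in at most 3^5 + 1 = 244 jumps. -/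
set_option maxRecDepth 100000 in
/-- The code sequence (base-3 codes) of the closed walk. -/
def wL : List ℕ := [138,37,140,157,44,205,200,85,102,43,104,199,158,113,84,139,36,103,156,135,82,99,154,161,142,41,206,201,42,53,38,39,204,203,198,123,76,119,108,137,86,87,106,89,40,159,202,101,134,129,128,153,160,105,100,83,90,95,146,143,88,107,116,141,136,155,152,147,96,81,126,133,114,125,132,117,150,97,92,31,98,211,144,193,238,49,34,109,46,93,208,149,196,213,212,145,192,151,30,91,48,207,214,51,50,29,190,197,32,191,94,27,148,195,210,209,194,215,52,33,28,45,78,21,20,25,186,241,184,13,110,189,0,165,6,35,170,5,164,185,180,237,222,169,4,67,220,57,216,163,178,131,10,175,22,181,188,173,226,111,232,61,16,177,162,1,122,55,120,187,166,7,70,223,62,17,24,19,2,47,26,79,72,235,242,77,236,73,58,229,172,217,56,221,176,233,218,65,80,23,124,183,240,225,64,9,54,69,12,75,18,171,228,63,234,239,68,11,182,227,74,121,168,219,118,115,130,15,112,127,66,3,174,231,60,59,224,167,14,179,8,71,230,237]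

def wc (n : ℕ) : ℕ := wL.getD n 0

def dec (n : ℕ) : Fin 5 → Fin 3 := fun i => ⟨n / 3 ^ (i : ℕ) % 3, Nat.mod_lt _ (by norm_num)⟩

def enc (v : Fin 5 → Fin 3) : ℕ :=
  (v 0).val + 3 * (v 1).val + 9 * (v 2).val + 27 * (v 3).val + 81 * (v 4).val

def gw (m : ZMod 244) : Fin 5 → Fin 3 := dec (wc m.val)

lemma dec_enc (v : Fin 5 → Fin 3) : dec (enc v) = v := by
  have h0 := (v 0).isLt; have h1 := (v 1).isLt; have h2 := (v 2).isLt
  have h3 := (v 3).isLt; have h4 := (v 4).isLt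
  funext i
  fin_cases i <;> (apply Fin.ext; simp [dec, enc]; omega)

lemma enc_dec (n : ℕ) (hn : n < 243) : enc (dec n) = n := by
  simp only [dec, enc, show ((0:Fin 5):ℕ) = 0 from rfl, show ((1:Fin 5):ℕ) = 1 from rfl,
    show ((2:Fin 5):ℕ) = 2 from rfl, show ((3:Fin 5):ℕ) = 3 from rfl,
    show ((4:Fin 5):ℕ) = 4 from rfl]
  norm_num; omega

lemma enc_lt (v : Fin 5 → Fin 3) : enc v < 243 := by
  have h0 := (v 0).isLt; have h1 := (v 1).isLt; have h2 := (v 2).isLt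
  have h3 := (v 3).isLt; have h4 := (v 4).isLt
  unfold enc; omega

set_option maxRecDepth 100000 in
lemma mem_wL : ∀ n : Fin 243, (n : ℕ) ∈ wL := by decide

set_option maxRecDepth 100000 in
lemma wc_lt : ∀ k : Fin 244, wc k < 243 := by decide

set_option maxRecDepth 100000 in
lemma nodup_take : (wL.take 243).Nodup := by decide

set_option maxRecDepth 100000 in
lemma wL_length : wL.length = 244 := by decide

lemma wc_eq (a : ℕ) (h : a < 244) : wc a = wL[a]'(by rw [wL_length]; omega) := by
  rw [wc, List.getD_eq_getElem _ _ (by rw [wL_length]; omega)]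

set_option maxRecDepth 100000 in
lemma wc_141 : wc 141 = 237 := by decide

set_option maxRecDepth 100000 in
lemma wc_243 : wc 243 = 237 := by decide

set_option maxRecDepth 100000 in
lemma step_key : ∀ k : Fin 244,
    ∑ i, ((dec (wc k) i : ℤ) - (dec (wc ((k.val + 1) % 244)) i)) ^ 2 = 5 := by decide

lemma wc_inj (a b : ℕ) (ha : a < 244) (hb : b < 244) (hne : a ≠ b)
    (h : wc a = wc b) : wc a = 237 := by
  rcases eq_or_lt_of_le (Nat.lt_succ_iff.mp ha) with h243 | ha'
  · rw [show a = 243 from h243]; exact wc_243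
  rcases eq_or_lt_of_le (Nat.lt_succ_iff.mp hb) with h243 | hb'
  · rw [h, show b = 243 from h243]; exact wc_243
  exfalso
  have hlen : (wL.take 243).length = 243 := by rw [List.length_take, wL_length]; omega
  have ga : wc a = (wL.take 243)[a]'(by omega) := by
    rw [wc_eq a ha]; simp [List.getElem_take]
  have gb : wc b = (wL.take 243)[b]'(by omega) := by
    rw [wc_eq b hb]; simp [List.getElem_take]
  rw [ga, gb] at h
  exact hne ((List.Nodup.getElem_inj_iff nodup_take).mp h)

/-- There exists a closed walk of length `244 = 3^5 + 1` on `C(3,5) = {0,1,2}^5` in which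
every step has squared Euclidean distance `5`, every vertex is visited at least once,
exactly one vertex is visited twice, and the walk returns to its start. -/
theorem closed_walk_244_on_C35 :
    ∃ g : ZMod 244 → (Fin 5 → Fin 3),
      Function.Surjective g ∧
      (∀ m, ∑ i, ((g m i : ℤ) - (g (m + 1) i)) ^ 2 = 5) ∧
      (∃! v : Fin 5 → Fin 3, ∃ m m' : ZMod 244, m ≠ m' ∧ g m = v ∧ g m' = v) := by
  refine ⟨gw, ?_, ?_, ?_⟩
  · intro v
    have hv : enc v < 243 := enc_lt v
    have hm := mem_wL ⟨enc v, hv⟩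
    obtain ⟨i, hi, hget⟩ := List.mem_iff_getElem.mp hm
    rw [wL_length] at hi
    refine ⟨(i : ZMod 244), ?_⟩
    have hval : ((i : ZMod 244)).val = i := ZMod.val_natCast_of_lt hi
    have hwc : wc i = enc v := by
      rw [wc_eq i hi]; exact hget
    rw [gw, hval, hwc, dec_enc]
  · intro m
    have hval : (m + 1).val = (m.val + 1) % 244 := by
      rw [ZMod.val_add, show (1 : ZMod 244).val = 1 from rfl]
    have := step_key ⟨m.val, m.val_lt⟩
    simpa [gw, hval] using this
  · refine ⟨dec 237, ⟨141, 243, by decide, ?_, ?_⟩, ?_⟩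
    · rw [gw, show ((141 : ZMod 244)).val = 141 from by decide, wc_141]
    · rw [gw, show ((243 : ZMod 244)).val = 243 from by decide, wc_243]
    · rintro v ⟨m, m', hne, rfl, h2⟩
      have hvne : m.val ≠ m'.val := fun h => hne (ZMod.val_injective _ h)
      have hwc : wc m.val = wc m'.val := by
        have : enc (gw m) = enc (gw m') := by rw [h2]
        rwa [gw, gw, enc_dec _ (wc_lt ⟨m.val, m.val_lt⟩),
          enc_dec _ (wc_lt ⟨m'.val, m'.val_lt⟩)] at this
      have := wc_inj m.val m'.val m.val_lt m'.val_lt hvne hwc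
      rw [gw, this]
end

section
/- There exists a closed standard knight's tour on C(3,4) − {(1,1,1,1)}: the 80 vertices of {0,1,2}^4 minus the center admit a Hamiltonian cycle where each move changes exactly one coordinate by ±2 and exactly one other coordinate by ±1, all other coordinates being unchanged. -/
set_option maxRecDepth 100000
set_option maxHeartbeats 4000000

/-- A standard knight move in `{0,1,2}^k`: exactly one coordinate changes by `±2`,
exactly one other coordinate changes by `±1`, and all remaining coordinates are
unchanged. -/
def StdKnightMove {k : ℕ} (a b : Fin k → Fin 3) : Prop :=
  ∃ i j, i ≠ j ∧ |(a i : ℤ) - (b i : ℤ)| = 2 ∧ |(a j : ℤ) - (b j : ℤ)| = 1 ∧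
    ∀ l, l ≠ i → l ≠ j → a l = b l

def tourFn : Fin 80 → (Fin 4 → Fin 3) :=
  ![![0,0,0,0],
  ![0,0,1,2],
  ![0,1,1,0],
  ![1,1,1,2],
  ![1,0,1,0],
  ![1,2,1,1],
  ![2,0,1,1],
  ![0,1,1,1],
  ![2,1,1,0],
  ![0,2,1,0],
  ![0,0,1,1],
  ![2,1,1,1],
  ![0,1,1,2],
  ![1,1,1,0],
  ![1,2,1,2],
  ![1,0,1,1],
  ![0,2,1,1],
  ![2,2,1,0],
  ![2,1,1,2],
  ![2,0,1,0],
  ![2,2,1,1],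
  ![2,0,1,2],
  ![2,0,0,0],
  ![0,0,1,0],
  ![1,0,1,2],
  ![0,2,1,2],
  ![1,2,1,0],
  ![2,2,1,2],
  ![0,2,0,2],
  ![1,0,0,2],
  ![0,0,2,2],
  ![0,0,0,1],
  ![1,0,2,1],
  ![1,1,0,1],
  ![0,1,2,1],
  ![0,1,0,0],
  ![0,0,2,0],
  ![0,2,2,1],
  ![1,2,0,1],
  ![1,1,2,1],
  ![2,1,0,1],
  ![2,0,2,1],
  ![1,0,0,1],
  ![0,2,0,1],
  ![1,2,2,1],
  ![1,0,2,0],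
  ![0,2,2,0],
  ![1,2,0,0],
  ![2,2,2,0],
  ![1,2,2,2],
  ![1,1,0,2],
  ![2,1,2,2],
  ![1,1,2,0],
  ![0,1,2,2],
  ![2,0,2,2],
  ![2,1,2,0],
  ![1,1,0,0],
  ![0,1,0,2],
  ![2,2,0,2],
  ![2,2,2,1],
  ![0,2,2,2],
  ![0,0,2,1],
  ![0,0,0,2],
  ![1,0,2,2],
  ![2,0,0,2],
  ![1,0,0,0],
  ![2,0,2,0],
  ![2,0,0,1],
  ![2,2,0,0],
  ![1,2,0,2],
  ![1,1,2,2],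
  ![1,2,2,0],
  ![2,2,2,2],
  ![2,1,0,2],
  ![0,1,0,1],
  ![0,1,2,0],
  ![0,2,0,0],
  ![2,2,0,1],
  ![2,1,2,1],
  ![2,1,0,0]]

instance {k:ℕ} (a b : Fin k → Fin 3) : Decidable (StdKnightMove a b) := by
  unfold StdKnightMove; infer_instance

/-- There exists a closed standard knight's tour on `C(3,4) − {(1,1,1,1)}`: the 80
vertices of `{0,1,2}^4` minus the center admit a Hamiltonian cycle under standard
knight moves. -/
theorem closed_knight_tour_C34_minus_center :
    ∃ g : ZMod 80 → (Fin 4 → Fin 3),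
      Function.Injective g ∧
      (∀ m, g m ≠ fun _ => 1) ∧
      (∀ v : Fin 4 → Fin 3, v ≠ (fun _ => 1) → ∃ m, g m = v) ∧
      (∀ m, StdKnightMove (g m) (g (m + 1))) := by
  exact ⟨fun m : ZMod 80 => tourFn m, by decide, by decide, by decide, by decide⟩
end

section
/- For every integer k ≥ 6, there exists a closed Euclidean knight's tour on C(2,k) = {0,1}^k: the graph on the vertices of the k-dimensional hypercube, with edges between pairs of vertices at Hamming distance exactly 5, is Hamiltonian. -/
open Finset

namespace C2kAux

/-! ### Nat-level Gray code lemmas -/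

lemma testbit_high {a N : ℕ} (h : a < 2 ^ N) {i : ℕ} (hi : N ≤ i) : a.testBit i = false :=
  Nat.testBit_lt_two_pow (lt_of_lt_of_le h (Nat.pow_le_pow_right (by norm_num) hi))

lemma gray_inj {a b : ℕ} (h : a ^^^ a / 2 = b ^^^ b / 2) : a = b := by
  have key : ∀ i, a.testBit (i + 1) = b.testBit (i + 1) → a.testBit i = b.testBit i := by
    intro i hi
    have h2 := congrArg (fun n => n.testBit i) h
    simp only [Nat.testBit_xor, Nat.testBit_div_two] at h2
    rw [hi] at h2
    cases hb : b.testBit (i + 1) <;> rw [hb] at h2 <;>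
      cases ha : a.testBit i <;> cases hb2 : b.testBit i <;> simp_all
  set N := max a b with hN
  have haN : a < 2 ^ N := lt_of_le_of_lt (le_max_left a b) (Nat.lt_two_pow_self (n := N))
  have hbN : b < 2 ^ N := lt_of_le_of_lt (le_max_right a b) (Nat.lt_two_pow_self (n := N))
  have high : ∀ i, N ≤ i → a.testBit i = b.testBit i := by
    intro i hi; rw [testbit_high haN hi, testbit_high hbN hi]
  have down : ∀ j, a.testBit (N - j) = b.testBit (N - j) := by
    intro j
    induction j with
    | zero => exact high N (by omega)
    | succ j ih =>
      rcases le_or_gt N j with hj | hj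
      · have e : N - (j + 1) = N - j := by omega
        rw [e]; exact ih
      · have e : N - j = (N - (j + 1)) + 1 := by omega
        rw [e] at ih
        exact key _ ih
  apply Nat.eq_of_testBit_eq
  intro i
  rcases le_or_gt N i with hi | hi
  · exact high i hi
  · have e : i = N - (N - i) := by omega
    rw [e]; exact down _

lemma xor_succ : ∀ m : ℕ, ∃ t, m ^^^ (m + 1) = 2 ^ (t + 1) - 1 ∧ 2 ^ t ≤ m + 1 := by
  intro m
  induction m using Nat.strong_induction_on with
  | _ m ih =>
    rcases Nat.even_or_odd m with ⟨j, hj⟩ | ⟨j, hj⟩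
    · refine ⟨0, ?_, by omega⟩
      apply Nat.eq_of_testBit_eq
      intro i
      cases i with
      | zero =>
        simp only [Nat.testBit_zero, Nat.testBit_xor]
        have h1 : m % 2 = 0 := by omega
        have h2 : (m + 1) % 2 = 1 := by omega
        have h3 : (2 ^ (0 + 1) - 1) % 2 = 1 := by norm_num
        simp [h1, h2, h3]
        omega
      | succ i =>
        rw [Nat.testBit_xor, ← Nat.testBit_div_two, ← Nat.testBit_div_two (m + 1)]
        have h1 : (m + 1) / 2 = m / 2 := by omega
        have h2 : (2 ^ (0 + 1) - 1 : ℕ) = 1 := by norm_num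
        rw [h1, h2]
        simp [Nat.testBit_succ]
    · obtain ⟨t, h1, h2⟩ := ih j (by omega)
      refine ⟨t + 1, ?_, ?_⟩
      · have key : m ^^^ (m + 1) = 2 * (j ^^^ (j + 1)) + 1 := by
          apply Nat.eq_of_testBit_eq
          intro i
          cases i with
          | zero =>
            simp only [Nat.testBit_zero, Nat.testBit_xor]
            have e1 : m % 2 = 1 := by omega
            have e2 : (m + 1) % 2 = 0 := by omega
            have e3 : (2 * (j ^^^ (j + 1)) + 1) % 2 = 1 := by omega
            simp [e1, e2, e3]
            omega
          | succ i =>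
            rw [Nat.testBit_xor, ← Nat.testBit_div_two, ← Nat.testBit_div_two (m + 1),
              ← Nat.testBit_div_two (2 * (j ^^^ (j + 1)) + 1)]
            have e1 : m / 2 = j := by omega
            have e2 : (m + 1) / 2 = j + 1 := by omega
            have e3 : (2 * (j ^^^ (j + 1)) + 1) / 2 = j ^^^ (j + 1) := by omega
            rw [e1, e2, e3, Nat.testBit_xor]
        rw [key, h1]
        have e4 : (2 : ℕ) ^ (t + 1 + 1) = 2 * 2 ^ (t + 1) := by ring
        have e5 : (1 : ℕ) ≤ 2 ^ (t + 1) := Nat.one_le_two_pow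
        omega
      · have e : (2 : ℕ) ^ (t + 1) = 2 * 2 ^ t := by ring
        omega

lemma pow_xor (t : ℕ) : (2 ^ (t + 1) - 1) ^^^ (2 ^ t - 1) = 2 ^ t := by
  apply Nat.eq_of_testBit_eq
  intro i
  rw [Nat.testBit_xor, Nat.testBit_two_pow_sub_one, Nat.testBit_two_pow_sub_one,
    Nat.testBit_two_pow]
  by_cases h1 : i < t + 1 <;> by_cases h2 : i < t <;> by_cases h3 : t = i <;>
    simp [h1, h2, h3] <;> omega

lemma xor_div_two (a b : ℕ) : a / 2 ^^^ b / 2 = (a ^^^ b) / 2 := by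
  apply Nat.eq_of_testBit_eq
  intro i
  simp [Nat.testBit_xor, Nat.testBit_div_two]

lemma gray_step (m : ℕ) :
    ∃ t, (m ^^^ m / 2) ^^^ ((m + 1) ^^^ (m + 1) / 2) = 2 ^ t ∧ 2 ^ t ≤ m + 1 := by
  obtain ⟨t, h1, h2⟩ := xor_succ m
  refine ⟨t, ?_, h2⟩
  have hsh : (m ^^^ m / 2) ^^^ ((m + 1) ^^^ (m + 1) / 2)
      = (m ^^^ (m + 1)) ^^^ ((m ^^^ (m + 1)) / 2) := by
    rw [← xor_div_two]
    apply Nat.eq_of_testBit_eq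
    intro i
    simp only [Nat.testBit_xor]
    cases m.testBit i <;> cases (m + 1).testBit i <;>
      cases (m / 2).testBit i <;> cases ((m + 1) / 2).testBit i <;> rfl
  rw [hsh, h1]
  have e : (2 : ℕ) ^ (t + 1) = 2 * 2 ^ t := by ring
  have e2 : (2 ^ (t + 1) - 1 : ℕ) / 2 = 2 ^ t - 1 := by omega
  rw [e2, pow_xor]

lemma gray_last {k : ℕ} (hk : 0 < k) :
    ((2 ^ k - 1) ^^^ (2 ^ k - 1) / 2) ^^^ (0 ^^^ 0 / 2) = 2 ^ (k - 1) := by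
  have e : (2 : ℕ) ^ k = 2 * 2 ^ (k - 1) := by
    conv_lhs => rw [show k = (k - 1) + 1 by omega]
    ring
  have e2 : (2 ^ k - 1 : ℕ) / 2 = 2 ^ (k - 1) - 1 := by omega
  have e3 : (2 ^ k - 1 : ℕ) = 2 ^ ((k - 1) + 1) - 1 := by
    congr 1; omega
  simp only [Nat.zero_xor, Nat.zero_div, Nat.xor_zero]
  rw [e2, e3, pow_xor]

/-! ### The Gray code vector and its properties -/

variable {k : ℕ}

/-- The Gray-code vector of `m`. -/
def gv (k : ℕ) (m : ZMod (2 ^ k)) : Fin k → ZMod 2 :=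
  fun i => if Nat.testBit (m.val ^^^ m.val / 2) i.val then 1 else 0

lemma gv_injective (k : ℕ) [NeZero (2 ^ k)] : Function.Injective (gv k) := by
  intro m n h
  have hm : m.val < 2 ^ k := ZMod.val_lt m
  have hn : n.val < 2 ^ k := ZMod.val_lt n
  have hm2 : m.val ^^^ m.val / 2 < 2 ^ k := Nat.xor_lt_two_pow hm (by omega)
  have hn2 : n.val ^^^ n.val / 2 < 2 ^ k := Nat.xor_lt_two_pow hn (by omega)
  have hbits : m.val ^^^ m.val / 2 = n.val ^^^ n.val / 2 := by
    apply Nat.eq_of_testBit_eq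
    intro i
    rcases lt_or_ge i k with hi | hi
    · have hji : (if Nat.testBit (m.val ^^^ m.val / 2) i then (1 : ZMod 2) else 0)
          = (if Nat.testBit (n.val ^^^ n.val / 2) i then (1 : ZMod 2) else 0) :=
        congrFun h ⟨i, hi⟩
      cases hA : Nat.testBit (m.val ^^^ m.val / 2) i <;>
        cases hB : Nat.testBit (n.val ^^^ n.val / 2) i <;>
        rw [hA, hB] at hji <;> simp only [if_true, if_false] at hji <;>
        first
          | rfl
          | exact absurd hji (by decide)
    · rw [testbit_high hm2 hi, testbit_high hn2 hi]
  exact ZMod.val_injective _ (gray_inj hbits)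

lemma gv_bijective (k : ℕ) [NeZero (2 ^ k)] : Function.Bijective (gv k) := by
  rw [Fintype.bijective_iff_injective_and_card]
  refine ⟨gv_injective k, ?_⟩
  rw [ZMod.card, Fintype.card_fun]
  simp

lemma gv_step (hk : 0 < k) [NeZero (2 ^ k)] (m : ZMod (2 ^ k)) :
    ∃ t : Fin k, ∀ j : Fin k, (gv k m j ≠ gv k (m + 1) j ↔ j = t) := by
  haveI : Fact (1 < 2 ^ k) := ⟨by
    have : (2 : ℕ) ^ 1 ≤ 2 ^ k := Nat.pow_le_pow_right (by norm_num) hk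
    omega⟩
  have hm : m.val < 2 ^ k := ZMod.val_lt m
  have hval : (m + 1).val = (m.val + 1) % 2 ^ k := by
    rw [ZMod.val_add, ZMod.val_one]
  have key : ∃ t, t < k ∧
      (m.val ^^^ m.val / 2) ^^^ ((m + 1).val ^^^ (m + 1).val / 2) = 2 ^ t := by
    rcases eq_or_lt_of_le (by omega : m.val + 1 ≤ 2 ^ k) with he | hlt
    · refine ⟨k - 1, by omega, ?_⟩
      have h0 : (m + 1).val = 0 := by rw [hval, he, Nat.mod_self]
      have hm1 : m.val = 2 ^ k - 1 := by omega
      rw [h0, hm1]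
      exact gray_last hk
    · obtain ⟨t, h1, h2⟩ := gray_step m.val
      have hvs : (m + 1).val = m.val + 1 := by rw [hval, Nat.mod_eq_of_lt hlt]
      refine ⟨t, ?_, by rw [hvs]; exact h1⟩
      have h3 : (2 : ℕ) ^ t < 2 ^ k := by omega
      exact (Nat.pow_lt_pow_iff_right (by norm_num)).mp h3
  obtain ⟨t, ht, hx⟩ := key
  refine ⟨⟨t, ht⟩, fun j => ?_⟩
  have hbj : (Nat.testBit (m.val ^^^ m.val / 2) j.val
        ^^ Nat.testBit ((m + 1).val ^^^ (m + 1).val / 2) j.val) = decide (t = j.val) := by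
    rw [← Nat.testBit_xor, hx, Nat.testBit_two_pow]
  have hgv : (gv k m j ≠ gv k (m + 1) j)
      ↔ Nat.testBit (m.val ^^^ m.val / 2) j.val
        ≠ Nat.testBit ((m + 1).val ^^^ (m + 1).val / 2) j.val := by
    unfold gv
    cases Nat.testBit (m.val ^^^ m.val / 2) j.val <;>
      cases Nat.testBit ((m + 1).val ^^^ (m + 1).val / 2) j.val <;> simp
  have hne : (Nat.testBit (m.val ^^^ m.val / 2) j.val
      ≠ Nat.testBit ((m + 1).val ^^^ (m + 1).val / 2) j.val) ↔ t = j.val := by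
    revert hbj
    cases Nat.testBit (m.val ^^^ m.val / 2) j.val <;>
      cases Nat.testBit ((m + 1).val ^^^ (m + 1).val / 2) j.val <;>
      intro hbj <;> simp_all
  rw [hgv, hne, Fin.ext_iff]
  exact ⟨fun h => h.symm, fun h => h.symm⟩

/-! ### The linear involution `Tm` -/

/-- Set of the first `n` indices. -/
def sLt (k n : ℕ) : Finset (Fin k) := univ.filter fun j : Fin k => (j : ℕ) < n

lemma mem_sLt {n : ℕ} {j : Fin k} : j ∈ sLt k n ↔ (j : ℕ) < n := by
  simp [sLt]

lemma card_sLt {n : ℕ} (h : n ≤ k) : (sLt k n).card = n := by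
  have he : sLt k n = Finset.attachFin (Finset.range n)
      (fun m hm => lt_of_lt_of_le (Finset.mem_range.mp hm) h) := by
    ext j
    simp [sLt, Finset.mem_attachFin]
  rw [he, Finset.card_attachFin, Finset.card_range]

def par (x : Fin k → ZMod 2) : ZMod 2 := ∑ i, x i

def par6 (x : Fin k → ZMod 2) : ZMod 2 := ∑ i ∈ sLt k 6, x i

def cvec (x : Fin k → ZMod 2) : Fin k → ZMod 2 :=
  fun j => if (j : ℕ) < 4 then par x else if (j : ℕ) < 6 then par6 x else 0

def Tm (x : Fin k → ZMod 2) : Fin k → ZMod 2 := fun j => x j + cvec x j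

lemma smul_zmod2 : ∀ a : ZMod 2, 4 • a = 0 ∧ 2 • a = 0 := by decide

lemma sum_cvec (hk : 6 ≤ k) {s : Finset (Fin k)} (hs : sLt k 6 ⊆ s)
    (x : Fin k → ZMod 2) : ∑ j ∈ s, cvec x j = 0 := by
  classical
  have hsub46 : sLt k 4 ⊆ sLt k 6 := by
    intro j hj
    simp only [sLt, mem_filter, mem_univ, true_and] at hj ⊢
    omega
  unfold cvec
  rw [Finset.sum_ite]
  have hf1 : s.filter (fun j : Fin k => (j : ℕ) < 4) = sLt k 4 := by
    ext j
    simp only [mem_filter, sLt, mem_univ, true_and]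
    constructor
    · exact fun hh => hh.2
    · intro hh
      refine ⟨hs (hsub46 ?_), hh⟩
      simp only [sLt, mem_filter, mem_univ, true_and]
      exact hh
  have hf2 : (s.filter fun j : Fin k => ¬ (j : ℕ) < 4).filter (fun j : Fin k => (j : ℕ) < 6)
      = sLt k 6 \ sLt k 4 := by
    ext j
    simp only [mem_filter, mem_sdiff, sLt, mem_univ, true_and]
    constructor
    · rintro ⟨⟨_, h4⟩, h6⟩
      exact ⟨h6, h4⟩
    · rintro ⟨h6, h4⟩
      refine ⟨⟨hs ?_, h4⟩, h6⟩
      simp only [sLt, mem_filter, mem_univ, true_and]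
      exact h6
  rw [Finset.sum_ite, hf1, hf2, Finset.sum_const, Finset.sum_const, Finset.sum_const_zero,
    add_zero, Finset.card_sdiff_of_subset hsub46, card_sLt (by omega), card_sLt (by omega)]
  have h1 := (smul_zmod2 (par x)).1
  have h2 := (smul_zmod2 (par6 x)).2
  rw [show (6 - 4 : ℕ) = 2 from rfl, h1, h2, add_zero]

lemma par_Tm (hk : 6 ≤ k) (x : Fin k → ZMod 2) : par (Tm x) = par x := by
  unfold par Tm
  rw [Finset.sum_add_distrib, sum_cvec hk (Finset.subset_univ _) x, add_zero]

lemma par6_Tm (hk : 6 ≤ k) (x : Fin k → ZMod 2) : par6 (Tm x) = par6 x := by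
  unfold par6 Tm
  rw [Finset.sum_add_distrib, sum_cvec hk (Finset.Subset.refl _) x, add_zero]

lemma cvec_Tm (hk : 6 ≤ k) (x : Fin k → ZMod 2) : cvec (Tm x) = cvec x := by
  funext j
  unfold cvec
  rw [par_Tm hk, par6_Tm hk]

lemma Tm_involutive (hk : 6 ≤ k) : Function.Involutive (Tm (k := k)) := by
  intro x
  funext j
  show Tm x j + cvec (Tm x) j = x j
  rw [cvec_Tm hk]
  show (x j + cvec x j) + cvec x j = x j
  rw [add_assoc]
  have : cvec x j + cvec x j = 0 := by
    have := (smul_zmod2 (cvec x j)).2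
    rwa [two_nsmul] at this
  rw [this, add_zero]

lemma Tm_bijective (hk : 6 ≤ k) : Function.Bijective (Tm (k := k)) :=
  (Tm_involutive hk).bijective

/-! ### The weight-5 property -/

lemma Tm_card (hk : 6 ≤ k) (u v : Fin k → ZMod 2) (i0 : Fin k)
    (h : ∀ j, (u j ≠ v j ↔ j = i0)) :
    (univ.filter fun j => Tm u j ≠ Tm v j).card = 5 := by
  classical
  have hz : ∀ a b : ZMod 2, (a ≠ b ↔ a + b = 1) := by decide
  have hz0 : ∀ a b : ZMod 2, (a = b ↔ a + b = 0) := by decide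
  have hsum : ∀ j, u j + v j = if j = i0 then 1 else 0 := by
    intro j
    by_cases hj : j = i0
    · rw [if_pos hj]; exact (hz _ _).1 ((h j).2 hj)
    · rw [if_neg hj]
      refine (hz0 _ _).1 ?_
      by_contra hne
      exact hj ((h j).1 hne)
  have hpar : par u + par v = 1 := by
    unfold par
    rw [← Finset.sum_add_distrib]
    simp_rw [hsum]
    rw [Finset.sum_ite_eq' univ i0]
    simp
  have hpar6 : par6 u + par6 v = if (i0 : ℕ) < 6 then 1 else 0 := by
    unfold par6
    rw [← Finset.sum_add_distrib]
    simp_rw [hsum]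
    rw [Finset.sum_ite_eq' (sLt k 6) i0]
    simp [sLt]
  have hT : ∀ j, Tm u j + Tm v j = (if j = i0 then 1 else 0)
      + (if (j : ℕ) < 4 then (1 : ZMod 2)
          else if (j : ℕ) < 6 then (if (i0 : ℕ) < 6 then 1 else 0) else 0) := by
    intro j
    have e : Tm u j + Tm v j = (u j + v j) + (cvec u j + cvec v j) := by
      unfold Tm; ring
    rw [e, hsum]
    congr 1
    unfold cvec
    by_cases h2 : (j : ℕ) < 4
    · simpa [h2] using hpar
    · by_cases h3 : (j : ℕ) < 6
      · simpa [h2, h3] using hpar6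
      · simp [h2, h3]
  have v11 : ¬((1 : ZMod 2) + 1 = 1) := by decide
  have v01 : (0 : ZMod 2) + 1 = 1 := by decide
  have v10 : (1 : ZMod 2) + 0 = 1 := by decide
  have v00 : ¬((0 : ZMod 2) + 0 = 1) := by decide
  by_cases hi : (i0 : ℕ) < 6
  · have hset : (univ.filter fun j => Tm u j ≠ Tm v j) = (sLt k 6).erase i0 := by
      ext j
      simp only [mem_filter, mem_univ, true_and, mem_erase, sLt]
      rw [hz (Tm u j) (Tm v j), hT j]
      by_cases h1 : j = i0
      · subst h1
        rcases lt_or_ge (j : ℕ) 4 with h2 | h2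
        · rw [if_pos rfl, if_pos h2]
          exact iff_of_false v11 (by simp)
        · rw [if_pos rfl, if_neg (by omega : ¬ (j : ℕ) < 4), if_pos hi, if_pos hi]
          exact iff_of_false v11 (by simp)
      · rw [if_neg h1]
        rcases lt_or_ge (j : ℕ) 4 with h2 | h2
        · rw [if_pos h2]
          exact iff_of_true v01 ⟨h1, by omega⟩
        · rcases lt_or_ge (j : ℕ) 6 with h3 | h3
          · rw [if_neg (by omega : ¬ (j : ℕ) < 4), if_pos h3, if_pos hi]
            exact iff_of_true v01 ⟨h1, h3⟩
          · rw [if_neg (by omega : ¬ (j : ℕ) < 4), if_neg (by omega : ¬ (j : ℕ) < 6)]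
            refine iff_of_false v00 ?_
            rintro ⟨-, hh⟩
            omega
    rw [hset, Finset.card_erase_of_mem (by simp [sLt, hi]), card_sLt (by omega)]
  · have hset : (univ.filter fun j => Tm u j ≠ Tm v j) = insert i0 (sLt k 4) := by
      ext j
      simp only [mem_filter, mem_univ, true_and, Finset.mem_insert, sLt]
      rw [hz (Tm u j) (Tm v j), hT j]
      by_cases h1 : j = i0
      · subst h1
        rw [if_pos rfl, if_neg (by omega : ¬ (j : ℕ) < 4), if_neg (by omega : ¬ (j : ℕ) < 6)]
        exact iff_of_true v10 (Or.inl rfl)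
      · rw [if_neg h1]
        rcases lt_or_ge (j : ℕ) 4 with h2 | h2
        · rw [if_pos h2]
          exact iff_of_true v01 (Or.inr h2)
        · rcases lt_or_ge (j : ℕ) 6 with h3 | h3
          · rw [if_neg (by omega : ¬ (j : ℕ) < 4), if_pos h3, if_neg hi]
            refine iff_of_false v00 ?_
            rintro (hh | hh)
            · exact h1 hh
            · omega
          · rw [if_neg (by omega : ¬ (j : ℕ) < 4), if_neg (by omega : ¬ (j : ℕ) < 6)]
            refine iff_of_false v00 ?_
            rintro (hh | hh)
            · exact h1 hh
            · omega
    rw [hset, Finset.card_insert_of_notMem (by simp [sLt]; omega), card_sLt (by omega)]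

end C2kAux

/-- For every `k ≥ 6` there exists a closed Euclidean knight's tour on
`C(2,k) = {0,1}^k`: the graph on the vertices of the `k`-dimensional hypercube with
edges between pairs at Hamming distance exactly `5` is Hamiltonian. -/
theorem closed_tour_C2k (k : ℕ) (hk : 6 ≤ k) :
    ∃ g : ZMod (2 ^ k) → (Fin k → Fin 2), Function.Bijective g ∧
      ∀ m, (Finset.univ.filter fun i => g m i ≠ g (m + 1) i).card = 5 := by
  haveI : NeZero (2 ^ k) := ⟨by positivity⟩
  refine ⟨fun m => C2kAux.Tm (C2kAux.gv k m), ?_, ?_⟩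
  · exact (C2kAux.Tm_bijective hk).comp (C2kAux.gv_bijective k)
  · intro m
    obtain ⟨t, ht⟩ := C2kAux.gv_step (by omega) m
    exact C2kAux.Tm_card hk _ _ t ht
end

section
/- Combining existence and non-existence: a Euclidean knight's tour on the chessboard {0,1}^k exists if and only if k ≥ 6; moreover whenever a tour exists, a closed tour exists. -/
def gray (n : ℕ) : ℕ := n ^^^ n / 2

def ginv (g : ℕ) : ℕ :=
  if g = 0 then 0 else g ^^^ ginv (g / 2)
decreasing_by exact Nat.div_lt_self (Nat.pos_of_ne_zero (by assumption)) one_lt_two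

lemma xor_div_two (a b : ℕ) : (a ^^^ b) / 2 = a / 2 ^^^ b / 2 := by
  apply Nat.eq_of_testBit_eq
  intro i
  simp [Nat.testBit_div_two, Nat.testBit_xor]

lemma ginv_gray (n : ℕ) : ginv (gray n) = n := by
  induction n using Nat.strong_induction_on with
  | _ n ih =>
    rcases Nat.eq_zero_or_pos n with h | h
    · subst h; simp [gray, ginv]
    · have hne : gray n ≠ 0 := by
        intro hg
        have := Nat.xor_eq_zero_iff.mp hg
        have := Nat.div_lt_self h one_lt_two
        omega
      rw [ginv, if_neg hne]
      have : gray n / 2 = gray (n / 2) := by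
        rw [gray, xor_div_two, gray, Nat.div_div_eq_div_mul]
      rw [this, ih (n / 2) (Nat.div_lt_self h one_lt_two)]
      rw [gray, Nat.xor_assoc, Nat.xor_self, Nat.xor_zero]

lemma gray_inj : Function.Injective gray := by
  intro a b h
  have := ginv_gray a
  rw [h, ginv_gray] at this
  exact this.symm

lemma gray_lt {n k : ℕ} (h : n < 2 ^ k) : gray n < 2 ^ k :=
  Nat.xor_lt_two_pow h (lt_of_le_of_lt (Nat.div_le_self _ _) h)

lemma xor_succ (n : ℕ) : ∃ t, n ^^^ (n + 1) = 2 ^ (t + 1) - 1 := by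
  induction n using Nat.strong_induction_on with
  | _ n ih =>
    rcases Nat.even_or_odd n with ⟨m, hm⟩ | ⟨m, hm⟩
    · refine ⟨0, ?_⟩
      have h1 : n / 2 = m := by omega
      have h2 : (n + 1) / 2 = m := by omega
      apply Nat.eq_of_testBit_eq
      intro i
      cases i with
      | zero =>
        simp only [Nat.testBit_zero, Nat.testBit_xor]
        have e1 : n % 2 = 0 := by omega
        have e2 : (n+1) % 2 = 1 := by omega
        simp_all
        omega
      | succ i =>
        simp only [Nat.testBit_succ, xor_div_two, h1, h2, Nat.testBit_xor, Bool.xor_self]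
        have : (2:ℕ)^(0+1) - 1 = 1 := by norm_num
        rw [this]
        simp [Nat.testBit_succ]
    · obtain ⟨s, hs⟩ := ih m (by omega)
      refine ⟨s + 1, ?_⟩
      have key : n ^^^ (n + 1) = 2 * (m ^^^ (m + 1)) + 1 := by
        have h1 : n / 2 = m := by omega
        have h2 : (n + 1) / 2 = m + 1 := by omega
        have h3 : (2 * (m ^^^ (m + 1)) + 1) / 2 = m ^^^ (m + 1) := by omega
        apply Nat.eq_of_testBit_eq
        intro i
        cases i with
        | zero =>
          simp only [Nat.testBit_zero, Nat.testBit_xor]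
          have e1 : n % 2 = 1 := by omega
          have e2 : (n+1) % 2 = 0 := by omega
          have e3 : (2 * (m ^^^ (m + 1)) + 1) % 2 = 1 := by omega
          simp_all
          omega
        | succ i =>
          simp only [Nat.testBit_succ, xor_div_two, h1, h2, h3]
      rw [key, hs]
      have h4 : (2:ℕ) ^ (s + 1) ≥ 1 := Nat.one_le_two_pow
      have h5 : (2:ℕ) ^ (s + 1 + 1) = 2 * 2 ^ (s + 1) := by ring
      omega

lemma gray_step (n : ℕ) : ∃ t, gray n ^^^ gray (n + 1) = 2 ^ t := by
  obtain ⟨t, ht⟩ := xor_succ n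
  refine ⟨t, ?_⟩
  have h1 : gray n ^^^ gray (n + 1) = (n ^^^ (n + 1)) ^^^ (n / 2 ^^^ (n + 1) / 2) := by
    unfold gray
    rw [Nat.xor_assoc, Nat.xor_assoc]
    congr 1
    rw [← Nat.xor_assoc, ← Nat.xor_assoc, Nat.xor_comm (n/2)]
  have h2 : n / 2 ^^^ (n + 1) / 2 = (n ^^^ (n + 1)) / 2 := (xor_div_two _ _).symm
  rw [h1, h2, ht]
  have hp : (2:ℕ) ^ (t + 1) = 2 * 2 ^ t := by ring
  have hq : (2:ℕ) ^ t ≥ 1 := Nat.one_le_two_pow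
  have h3 : ((2:ℕ) ^ (t + 1) - 1) / 2 = 2 ^ t - 1 := by omega
  rw [h3]
  apply Nat.eq_of_testBit_eq
  intro i
  simp only [Nat.testBit_xor, Nat.testBit_two_pow_sub_one, Nat.testBit_two_pow]
  rcases Nat.lt_trichotomy i t with h | h | h
  · have h' : i < t + 1 := by omega
    have h'' : t ≠ i := by omega
    simp [h, h', h'']
  · subst h; simp
  · have h1 : ¬ i < t := by omega
    have h2 : ¬ i < t + 1 := by omega
    have h3 : t ≠ i := by omega
    simp [h1, h2, h3]

lemma gray_last {k : ℕ} (hk : 1 ≤ k) : gray (2 ^ k - 1) = 2 ^ (k - 1) := by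
  have hp : (2:ℕ) ^ k = 2 * 2 ^ (k - 1) := by
    rw [← pow_succ']; congr 1; omega
  have hq : (2:ℕ) ^ (k-1) ≥ 1 := Nat.one_le_two_pow
  have h3 : ((2:ℕ) ^ k - 1) / 2 = 2 ^ (k - 1) - 1 := by omega
  unfold gray
  rw [h3]
  apply Nat.eq_of_testBit_eq
  intro i
  simp only [Nat.testBit_xor, Nat.testBit_two_pow_sub_one, Nat.testBit_two_pow]
  rcases Nat.lt_trichotomy i (k-1) with h | h | h
  · have h' : i < k := by omega
    have h'' : k - 1 ≠ i := by omega
    simp [h, h', h'']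
  · subst h
    have h' : k - 1 < k := by omega
    simp [h']
  · have h1 : ¬ i < k - 1 := by omega
    have h2 : ¬ i < k := by omega
    have h3 : k - 1 ≠ i := by omega
    simp [h1, h2, h3]


section LL
variable {k : ℕ}

def uvec (k : ℕ) : Fin k → ZMod 2 := fun j => if (j:ℕ) < 4 then 1 else 0
def vvec (k : ℕ) : Fin k → ZMod 2 := fun j => if 2 ≤ (j:ℕ) ∧ (j:ℕ) < 6 then 1 else 0
def wvec (k : ℕ) : Fin k → ZMod 2 := fun j => if (j:ℕ) < 2 ∨ (4 ≤ (j:ℕ) ∧ (j:ℕ) < 6) then 1 else 0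

def suma (x : Fin k → ZMod 2) : ZMod 2 := ∑ i : Fin k, if 4 ≤ i.val then x i else 0
def sumb (x : Fin k → ZMod 2) : ZMod 2 := ∑ i : Fin k, if i.val < 2 then x i else 0
def sumc (x : Fin k → ZMod 2) : ZMod 2 := ∑ i : Fin k, if 2 ≤ i.val ∧ i.val < 4 then x i else 0

def Lmap (x : Fin k → ZMod 2) : Fin k → ZMod 2 :=
  fun j => x j + suma x * uvec k j + sumb x * vvec k j + sumc x * wvec k j

lemma fin_sum_nat (hk : 6 ≤ k) (F : ℕ → ZMod 2) (hF : ∀ n, 6 ≤ n → F n = 0) :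
    ∑ i : Fin k, F i.val = F 0 + F 1 + F 2 + F 3 + F 4 + F 5 := by
  rw [Fin.sum_univ_eq_sum_range]
  rw [← Finset.sum_range_add_sum_Ico F hk]
  rw [Finset.sum_eq_zero (fun n hn => hF n (Finset.mem_Ico.mp hn).1), add_zero]
  simp [Finset.sum_range_succ]

-- selector decomposition
lemma sel_decomp (p : Fin k → Prop) [DecidablePred p] (x : Fin k → ZMod 2) (a b c : ZMod 2) :
    (∑ i : Fin k, if p i then (x i + a * uvec k i + b * vvec k i + c * wvec k i) else 0)
    = (∑ i : Fin k, if p i then x i else 0) + a * (∑ i : Fin k, if p i then uvec k i else 0)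
      + b * (∑ i : Fin k, if p i then vvec k i else 0) + c * (∑ i : Fin k, if p i then wvec k i else 0) := by
  rw [Finset.mul_sum, Finset.mul_sum, Finset.mul_sum, ← Finset.sum_add_distrib,
    ← Finset.sum_add_distrib, ← Finset.sum_add_distrib]
  apply Finset.sum_congr rfl
  intro i _
  split_ifs <;> ring

lemma sum_uvw_eval (hk : 6 ≤ k) (p : ℕ → Prop) [DecidablePred p] (q : ℕ → Prop) [DecidablePred q]
    (hq : ∀ n, 6 ≤ n → ¬ q n)
    (hval : (if p 0 ∧ q 0 then (1:ZMod 2) else 0) + (if p 1 ∧ q 1 then 1 else 0)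
      + (if p 2 ∧ q 2 then 1 else 0) + (if p 3 ∧ q 3 then 1 else 0)
      + (if p 4 ∧ q 4 then 1 else 0) + (if p 5 ∧ q 5 then 1 else 0) = 0) :
    (∑ i : Fin k, if p i.val then (if q i.val then (1:ZMod 2) else 0) else 0) = 0 := by
  have h1 : ∀ n, (if p n then (if q n then (1:ZMod 2) else 0) else 0) = (if p n ∧ q n then 1 else 0) := by
    intro n; split_ifs with h1 h2 h3 <;> tauto
  calc (∑ i : Fin k, if p i.val then (if q i.val then (1:ZMod 2) else 0) else 0)
      = ∑ i : Fin k, (fun n => if p n ∧ q n then (1:ZMod 2) else 0) i.val := by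
        apply Finset.sum_congr rfl; intro i _; exact h1 i.val
    _ = 0 := by
        rw [fin_sum_nat hk (fun n => if p n ∧ q n then (1:ZMod 2) else 0)
          (by intro n hn; simp only [if_neg (fun h : p n ∧ q n => hq n hn h.2)])]
        exact hval

lemma suma_L (hk : 6 ≤ k) (x : Fin k → ZMod 2) : suma (Lmap x) = suma x := by
  unfold suma Lmap
  rw [sel_decomp]
  rw [show (∑ i : Fin k, if 4 ≤ i.val then uvec k i else 0)
      = ∑ i : Fin k, if 4 ≤ i.val then (if i.val < 4 then (1:ZMod 2) else 0) else 0 from rfl]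
  rw [sum_uvw_eval hk (4 ≤ ·) (· < 4) (by intro n hn; omega) (by decide)]
  rw [show (∑ i : Fin k, if 4 ≤ i.val then vvec k i else 0)
      = ∑ i : Fin k, if 4 ≤ i.val then (if 2 ≤ i.val ∧ i.val < 6 then (1:ZMod 2) else 0) else 0 from rfl]
  rw [sum_uvw_eval hk (4 ≤ ·) (fun n => 2 ≤ n ∧ n < 6) (by intro n hn; omega) (by decide)]
  rw [show (∑ i : Fin k, if 4 ≤ i.val then wvec k i else 0)
      = ∑ i : Fin k, if 4 ≤ i.val then (if i.val < 2 ∨ (4 ≤ i.val ∧ i.val < 6) then (1:ZMod 2) else 0) else 0 from rfl]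
  rw [sum_uvw_eval hk (4 ≤ ·) (fun n => n < 2 ∨ (4 ≤ n ∧ n < 6)) (by intro n hn; omega) (by decide)]
  ring

lemma sumb_L (hk : 6 ≤ k) (x : Fin k → ZMod 2) : sumb (Lmap x) = sumb x := by
  unfold sumb Lmap
  rw [sel_decomp]
  rw [show (∑ i : Fin k, if i.val < 2 then uvec k i else 0)
      = ∑ i : Fin k, if i.val < 2 then (if i.val < 4 then (1:ZMod 2) else 0) else 0 from rfl]
  rw [sum_uvw_eval hk (· < 2) (· < 4) (by intro n hn; omega) (by decide)]
  rw [show (∑ i : Fin k, if i.val < 2 then vvec k i else 0)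
      = ∑ i : Fin k, if i.val < 2 then (if 2 ≤ i.val ∧ i.val < 6 then (1:ZMod 2) else 0) else 0 from rfl]
  rw [sum_uvw_eval hk (· < 2) (fun n => 2 ≤ n ∧ n < 6) (by intro n hn; omega) (by decide)]
  rw [show (∑ i : Fin k, if i.val < 2 then wvec k i else 0)
      = ∑ i : Fin k, if i.val < 2 then (if i.val < 2 ∨ (4 ≤ i.val ∧ i.val < 6) then (1:ZMod 2) else 0) else 0 from rfl]
  rw [sum_uvw_eval hk (· < 2) (fun n => n < 2 ∨ (4 ≤ n ∧ n < 6)) (by intro n hn; omega) (by decide)]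
  ring

lemma sumc_L (hk : 6 ≤ k) (x : Fin k → ZMod 2) : sumc (Lmap x) = sumc x := by
  unfold sumc Lmap
  rw [sel_decomp]
  rw [show (∑ i : Fin k, if 2 ≤ i.val ∧ i.val < 4 then uvec k i else 0)
      = ∑ i : Fin k, if 2 ≤ i.val ∧ i.val < 4 then (if i.val < 4 then (1:ZMod 2) else 0) else 0 from rfl]
  rw [sum_uvw_eval hk (fun n => 2 ≤ n ∧ n < 4) (· < 4) (by intro n hn; omega) (by decide)]
  rw [show (∑ i : Fin k, if 2 ≤ i.val ∧ i.val < 4 then vvec k i else 0)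
      = ∑ i : Fin k, if 2 ≤ i.val ∧ i.val < 4 then (if 2 ≤ i.val ∧ i.val < 6 then (1:ZMod 2) else 0) else 0 from rfl]
  rw [sum_uvw_eval hk (fun n => 2 ≤ n ∧ n < 4) (fun n => 2 ≤ n ∧ n < 6) (by intro n hn; omega) (by decide)]
  rw [show (∑ i : Fin k, if 2 ≤ i.val ∧ i.val < 4 then wvec k i else 0)
      = ∑ i : Fin k, if 2 ≤ i.val ∧ i.val < 4 then (if i.val < 2 ∨ (4 ≤ i.val ∧ i.val < 6) then (1:ZMod 2) else 0) else 0 from rfl]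
  rw [sum_uvw_eval hk (fun n => 2 ≤ n ∧ n < 4) (fun n => n < 2 ∨ (4 ≤ n ∧ n < 6)) (by intro n hn; omega) (by decide)]
  ring

lemma Lmap_invol (hk : 6 ≤ k) (x : Fin k → ZMod 2) : Lmap (Lmap x) = x := by
  funext j
  show Lmap x j + suma (Lmap x) * uvec k j + sumb (Lmap x) * vvec k j + sumc (Lmap x) * wvec k j = x j
  rw [suma_L hk, sumb_L hk, sumc_L hk]
  show (x j + suma x * uvec k j + sumb x * vvec k j + sumc x * wvec k j)
      + suma x * uvec k j + sumb x * vvec k j + sumc x * wvec k j = x j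
  generalize suma x * uvec k j = A
  generalize sumb x * vvec k j = B
  generalize sumc x * wvec k j = C
  generalize x j = d
  revert A B C d
  decide

end LL

section Step
variable {k : ℕ}

def evec (k : ℕ) (t : Fin k) : Fin k → ZMod 2 := fun j => if j = t then 1 else 0

lemma sel_add (p : Fin k → Prop) [DecidablePred p] (x y : Fin k → ZMod 2) :
    (∑ i : Fin k, if p i then (x i + y i) else 0)
      = (∑ i : Fin k, if p i then x i else 0) + (∑ i : Fin k, if p i then y i else 0) := by
  rw [← Finset.sum_add_distrib]
  apply Finset.sum_congr rfl
  intro i _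
  split_ifs <;> ring

lemma Lmap_add (x y : Fin k → ZMod 2) :
    Lmap (fun j => x j + y j) = fun j => Lmap x j + Lmap y j := by
  funext j
  unfold Lmap suma sumb sumc
  rw [sel_add, sel_add, sel_add]
  ring

lemma sel_evec (p : Fin k → Prop) [DecidablePred p] (t : Fin k) :
    (∑ i : Fin k, if p i then evec k t i else 0) = if p t then 1 else 0 := by
  have : ∀ i : Fin k, (if p i then evec k t i else 0) = if i = t then (if p t then 1 else 0) else 0 := by
    intro i
    unfold evec
    by_cases h : i = t
    · subst h; simp
    · simp [h]
  rw [Finset.sum_congr rfl (fun i _ => this i)]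
  rw [Finset.sum_ite_eq' Finset.univ t (fun _ => if p t then 1 else 0)]
  simp

lemma fin_sum_nat' {M : Type*} [AddCommMonoid M] (hk : 6 ≤ k) (F : ℕ → M) (hF : ∀ n, 6 ≤ n → F n = 0) :
    ∑ i : Fin k, F i.val = F 0 + F 1 + F 2 + F 3 + F 4 + F 5 := by
  rw [Fin.sum_univ_eq_sum_range]
  rw [← Finset.sum_range_add_sum_Ico F hk]
  rw [Finset.sum_eq_zero (fun n hn => hF n (Finset.mem_Ico.mp hn).1), add_zero]
  simp [Finset.sum_range_succ]

lemma card_filter_val (hk : 6 ≤ k) (q : ℕ → Prop) [DecidablePred q] (hq : ∀ n, 6 ≤ n → ¬ q n) :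
    (Finset.univ.filter fun j : Fin k => q j.val).card
      = (if q 0 then 1 else 0) + (if q 1 then 1 else 0) + (if q 2 then 1 else 0)
        + (if q 3 then 1 else 0) + (if q 4 then 1 else 0) + (if q 5 then 1 else 0) := by
  rw [Finset.card_filter]
  exact fin_sum_nat' hk (fun n => if q n then 1 else 0) (fun n hn => if_neg (hq n hn))

lemma card_or (hk : 6 ≤ k) (t : Fin k) (q : ℕ → Prop) [DecidablePred q]
    (hq6 : ∀ n, 6 ≤ n → ¬ q n) (hqt : ¬ q t.val)
    (hcard : ((if q 0 then 1 else 0) + (if q 1 then 1 else 0) + (if q 2 then 1 else 0)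
        + (if q 3 then 1 else 0) + (if q 4 then 1 else 0) + (if q 5 then 1 else 0) : ℕ) = 4) :
    (Finset.univ.filter fun j : Fin k => j = t ∨ q j.val).card = 5 := by
  rw [Finset.filter_or, Finset.filter_eq']
  simp only [Finset.mem_univ, if_pos]
  rw [Finset.card_union_of_disjoint]
  · rw [Finset.card_singleton, card_filter_val hk q hq6, hcard]
  · simp [Finset.disjoint_singleton_left, hqt]

lemma weight_L (hk : 6 ≤ k) (x : Fin k → ZMod 2) (t : Fin k) :
    (Finset.univ.filter fun j => Lmap x j ≠ Lmap (fun j' => x j' + evec k t j') j).card = 5 := by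
  -- reduce to (Lmap (evec k t) j ≠ 0)
  have hred : ∀ j, (Lmap x j ≠ Lmap (fun j' => x j' + evec k t j') j) ↔ Lmap (evec k t) j ≠ 0 := by
    intro j
    rw [Lmap_add x (evec k t)]
    simp [left_eq_add]
  -- compute Lmap (evec k t) j
  have hsa : suma (evec k t) = if 4 ≤ t.val then 1 else 0 := sel_evec _ t
  have hsb : sumb (evec k t) = if t.val < 2 then 1 else 0 := sel_evec _ t
  have hsc : sumc (evec k t) = if 2 ≤ t.val ∧ t.val < 4 then 1 else 0 := sel_evec _ t
  rcases Nat.lt_or_ge t.val 2 with ht | ht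
  · -- q = supp v
    have hform : ∀ j : Fin k, Lmap (evec k t) j
        = (if j = t then 1 else 0) + (if 2 ≤ j.val ∧ j.val < 6 then 1 else 0) := by
      intro j
      show evec k t j + suma (evec k t) * uvec k j + sumb (evec k t) * vvec k j
          + sumc (evec k t) * wvec k j = _
      rw [hsa, hsb, hsc, if_neg (by omega), if_pos ht, if_neg (by omega)]
      unfold evec vvec
      ring
    have hqt : ¬ (2 ≤ t.val ∧ t.val < 6) := by omega
    have hiff : ∀ j : Fin k, (Lmap x j ≠ Lmap (fun j' => x j' + evec k t j') j) ↔ (j = t ∨ 2 ≤ j.val ∧ j.val < 6) := by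
      intro j
      rw [hred j, hform j]
      by_cases h1 : j = t <;> by_cases h2 : 2 ≤ j.val ∧ j.val < 6 <;>
        simp [h1, h2, hqt] <;> decide
    rw [Finset.filter_congr (fun j _ => hiff j)]
    exact card_or hk t (fun n => 2 ≤ n ∧ n < 6) (by omega) hqt (by decide)
  rcases Nat.lt_or_ge t.val 4 with ht2 | ht2
  · -- q = supp w
    have hform : ∀ j : Fin k, Lmap (evec k t) j
        = (if j = t then 1 else 0) + (if j.val < 2 ∨ (4 ≤ j.val ∧ j.val < 6) then 1 else 0) := by
      intro j
      show evec k t j + suma (evec k t) * uvec k j + sumb (evec k t) * vvec k j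
          + sumc (evec k t) * wvec k j = _
      rw [hsa, hsb, hsc, if_neg (by omega), if_neg (by omega), if_pos (by omega)]
      unfold evec wvec
      ring
    have hqt : ¬ (t.val < 2 ∨ (4 ≤ t.val ∧ t.val < 6)) := by omega
    have hiff : ∀ j : Fin k, (Lmap x j ≠ Lmap (fun j' => x j' + evec k t j') j) ↔ (j = t ∨ j.val < 2 ∨ (4 ≤ j.val ∧ j.val < 6)) := by
      intro j
      rw [hred j, hform j]
      by_cases h1 : j = t <;> by_cases h2 : j.val < 2 ∨ (4 ≤ j.val ∧ j.val < 6) <;>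
        simp [h1, h2, hqt, show ¬(t.val ≤ 1 ∨ 4 ≤ t.val ∧ t.val < 6) by omega] <;> omega
    rw [Finset.filter_congr (fun j _ => hiff j)]
    exact card_or hk t (fun n => n < 2 ∨ (4 ≤ n ∧ n < 6)) (by omega) hqt (by decide)
  · -- q = supp u
    have hform : ∀ j : Fin k, Lmap (evec k t) j
        = (if j = t then 1 else 0) + (if j.val < 4 then 1 else 0) := by
      intro j
      show evec k t j + suma (evec k t) * uvec k j + sumb (evec k t) * vvec k j
          + sumc (evec k t) * wvec k j = _
      rw [hsa, hsb, hsc, if_pos ht2, if_neg (by omega), if_neg (by omega)]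
      unfold evec uvec
      ring
    have hqt : ¬ (t.val < 4) := by omega
    have hiff : ∀ j : Fin k, (Lmap x j ≠ Lmap (fun j' => x j' + evec k t j') j) ↔ (j = t ∨ j.val < 4) := by
      intro j
      rw [hred j, hform j]
      by_cases h1 : j = t <;> by_cases h2 : j.val < 4 <;>
        simp [h1, h2, hqt] <;> decide
    rw [Finset.filter_congr (fun j _ => hiff j)]
    exact card_or hk t (fun n => n < 4) (by omega) hqt (by decide)

end Step

section Main
variable {k : ℕ}

def bitsv (k : ℕ) (n : ℕ) : Fin k → ZMod 2 := fun j => if Nat.testBit n j.val then 1 else 0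

noncomputable def gmap (k : ℕ) : ZMod (2 ^ k) → (Fin k → ZMod 2) :=
  fun m => Lmap (bitsv k (gray (ZMod.val m)))

lemma bitsv_inj (ha : a < 2 ^ k) (hb : b < 2 ^ k) (h : bitsv k a = bitsv k b) : a = b := by
  apply Nat.eq_of_testBit_eq
  intro i
  rcases Nat.lt_or_ge i k with hik | hik
  · have := congrFun h ⟨i, hik⟩
    unfold bitsv at this
    by_cases h1 : a.testBit i <;> by_cases h2 : b.testBit i <;> simp [h1, h2] at this ⊢
  · rw [Nat.testBit_lt_two_pow (lt_of_lt_of_le ha (Nat.pow_le_pow_right (by norm_num) hik)),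
      Nat.testBit_lt_two_pow (lt_of_lt_of_le hb (Nat.pow_le_pow_right (by norm_num) hik))]

lemma gmap_bij (hk : 6 ≤ k) : Function.Bijective (gmap k) := by
  haveI : NeZero (2 ^ k) := ⟨by positivity⟩
  rw [Fintype.bijective_iff_injective_and_card]
  constructor
  · intro m m' h
    have h2 : bitsv k (gray m.val) = bitsv k (gray m'.val) := by
      have := congrArg Lmap h
      unfold gmap at this
      rw [funext_iff] at this
      have h3 := this  -- (Lmap (Lmap ..)) = ..
      calc bitsv k (gray m.val) = Lmap (Lmap (bitsv k (gray m.val))) := (Lmap_invol hk _).symm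
        _ = Lmap (Lmap (bitsv k (gray m'.val))) := by rw [show Lmap (bitsv k (gray m.val)) = Lmap (bitsv k (gray m'.val)) from h]
        _ = bitsv k (gray m'.val) := Lmap_invol hk _
    have := bitsv_inj (gray_lt (ZMod.val_lt m)) (gray_lt (ZMod.val_lt m')) h2
    exact ZMod.val_injective _ (gray_inj this)
  · simp [ZMod.card, Fintype.card_fun]

lemma bitsv_xor {a b : ℕ} (t : Fin k) (h : a = b ^^^ 2 ^ t.val) :
    bitsv k a = fun j => bitsv k b j + evec k t j := by
  funext j
  unfold bitsv evec
  rw [h, Nat.testBit_xor, Nat.testBit_two_pow]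
  by_cases hjt : j = t
  · subst hjt
    simp only [decide_eq_true_eq, if_pos rfl]
    by_cases hb : b.testBit j.val <;> simp [hb] <;> decide
  · have : t.val ≠ j.val := fun hc => hjt (Fin.ext hc.symm)
    simp [this, if_neg hjt]

lemma gmap_step (hk : 6 ≤ k) (m : ZMod (2 ^ k)) :
    (Finset.univ.filter fun j => gmap k m j ≠ gmap k (m + 1) j).card = 5 := by
  haveI : NeZero (2 ^ k) := ⟨by positivity⟩
  have hnlt : m.val < 2 ^ k := ZMod.val_lt m
  have hone : (2:ℕ) ≤ 2 ^ k := by calc (2:ℕ) = 2^1 := rfl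
                                      _ ≤ 2^k := Nat.pow_le_pow_right (by norm_num) (by omega)
  have hval1 : (m + 1).val = (m.val + 1) % 2 ^ k := by
    rw [ZMod.val_add, ZMod.val_one_eq_one_mod, Nat.mod_eq_of_lt (show (1:ℕ) < 2^k by omega)]
  obtain ⟨t, hxor⟩ : ∃ t : Fin k, gray ((m + 1).val) = gray m.val ^^^ 2 ^ t.val := by
    rcases Nat.lt_or_ge (m.val + 1) (2 ^ k) with h | h
    · obtain ⟨t', ht'⟩ := gray_step m.val
      have h2 : gray m.val ^^^ gray (m.val + 1) < 2 ^ k :=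
        Nat.xor_lt_two_pow (gray_lt hnlt) (gray_lt h)
      have h3 : t' < k := by
        rw [ht'] at h2
        exact (Nat.pow_lt_pow_iff_right (by norm_num)).mp h2
      refine ⟨⟨t', h3⟩, ?_⟩
      rw [hval1, Nat.mod_eq_of_lt h, ← ht', ← Nat.xor_assoc, Nat.xor_self, Nat.zero_xor]
    · have hn1 : m.val = 2 ^ k - 1 := by omega
      have hval0 : (m + 1).val = 0 := by
        rw [hval1, hn1, show 2 ^ k - 1 + 1 = 2 ^ k by omega, Nat.mod_self]
      refine ⟨⟨k - 1, by omega⟩, ?_⟩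
      rw [hval0, hn1, gray_last (by omega)]
      show gray 0 = _
      rw [show gray 0 = 0 from rfl, Nat.xor_self]
  have hb := bitsv_xor t hxor
  simp only [gmap]
  simp only [hb]
  exact weight_L hk _ t

end Main


/-- An open Euclidean knight's tour on `{0,1}^k`: a bijective enumeration of all `2^k`
vertices in which consecutive vertices are at Hamming distance exactly `5`. -/
def OpenTourC2 (k : ℕ) : Prop :=
  ∃ f : Fin (2 ^ k) → (Fin k → Fin 2), Function.Bijective f ∧
    ∀ (i : ℕ) (h : i + 1 < 2 ^ k),
      (Finset.univ.filter fun j =>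
        f ⟨i, Nat.lt_of_succ_lt h⟩ j ≠ f ⟨i + 1, h⟩ j).card = 5

/-- A closed Euclidean knight's tour on `{0,1}^k`: a Hamiltonian cycle in the
Hamming-distance-5 graph. -/
def ClosedTourC2 (k : ℕ) : Prop :=
  ∃ g : ZMod (2 ^ k) → (Fin k → Fin 2), Function.Bijective g ∧
    ∀ m, (Finset.univ.filter fun i => g m i ≠ g (m + 1) i).card = 5

lemma closed_of_six {k : ℕ} (h6 : 6 ≤ k) : ClosedTourC2 k :=
  ⟨gmap k, gmap_bij h6, gmap_step h6⟩

lemma open_of_six {k : ℕ} (h6 : 6 ≤ k) : OpenTourC2 k := by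
  haveI : NeZero (2 ^ k) := ⟨by positivity⟩
  have hc : Function.Bijective (fun i : Fin (2 ^ k) => ((i.val : ℕ) : ZMod (2 ^ k))) := by
    rw [Fintype.bijective_iff_injective_and_card]
    refine ⟨fun i i' h => ?_, by simp [ZMod.card]⟩
    have := congrArg ZMod.val h
    rw [ZMod.val_cast_of_lt i.isLt, ZMod.val_cast_of_lt i'.isLt] at this
    exact Fin.ext this
  refine ⟨fun i => gmap k ((i.val : ℕ) : ZMod (2 ^ k)), (gmap_bij h6).comp hc, ?_⟩
  intro i h
  have key := gmap_step h6 ((i : ℕ) : ZMod (2 ^ k))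
  have hcast : (((i + 1 : ℕ)) : ZMod (2 ^ k)) = ((i : ℕ) : ZMod (2 ^ k)) + 1 := by push_cast; ring
  show (Finset.univ.filter fun j =>
    gmap k ((i : ℕ) : ZMod (2 ^ k)) j ≠ gmap k (((i + 1 : ℕ)) : ZMod (2 ^ k)) j).card = 5
  simp only [hcast]
  exact key

lemma no_open_small {k : ℕ} (hk : 1 ≤ k) (hlt : k < 6) : ¬ OpenTourC2 k := by
  rintro ⟨f, hbij, hstep⟩
  rcases Nat.lt_or_ge k 5 with h5 | h5
  · have h2 : 1 < 2 ^ k := by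
      calc 1 < 2 ^ 1 := by norm_num
        _ ≤ 2 ^ k := Nat.pow_le_pow_right (by norm_num) hk
    have hcard := hstep 0 h2
    have h4 := Finset.card_filter_le (Finset.univ : Finset (Fin k))
      (fun j => f ⟨0, Nat.lt_of_succ_lt h2⟩ j ≠ f ⟨0 + 1, h2⟩ j)
    rw [hcard, Finset.card_univ, Fintype.card_fin] at h4
    omega
  · have hk5 : k = 5 := by omega
    subst hk5
    have h1 := hstep 0 (by norm_num)
    have h2 := hstep 1 (by norm_num)
    have e1 : ∀ j, f ⟨0, by norm_num⟩ j ≠ f ⟨1, by norm_num⟩ j := by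
      intro j
      have hu := Finset.eq_univ_of_card _ (by rw [h1]; simp)
      have hj : j ∈ Finset.filter
          (fun j => f ⟨0, by norm_num⟩ j ≠ f ⟨0 + 1, by norm_num⟩ j) Finset.univ :=
        by rw [hu]; exact Finset.mem_univ j
      exact (Finset.mem_filter.mp hj).2
    have e2 : ∀ j, f ⟨1, by norm_num⟩ j ≠ f ⟨2, by norm_num⟩ j := by
      intro j
      have hu := Finset.eq_univ_of_card _ (by rw [h2]; simp)
      have hj : j ∈ Finset.filter
          (fun j => f ⟨1, by norm_num⟩ j ≠ f ⟨1 + 1, by norm_num⟩ j) Finset.univ :=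
        by rw [hu]; exact Finset.mem_univ j
      exact (Finset.mem_filter.mp hj).2
    have heq : f ⟨0, by norm_num⟩ = f ⟨2, by norm_num⟩ := by
      funext j
      have a := e1 j
      have b := e2 j
      apply Fin.ext
      have ha : (f ⟨0, by norm_num⟩ j).val ≠ (f ⟨1, by norm_num⟩ j).val := by
        intro hc; exact a (Fin.ext hc)
      have hb : (f ⟨1, by norm_num⟩ j).val ≠ (f ⟨2, by norm_num⟩ j).val := by
        intro hc; exact b (Fin.ext hc)
      have l0 := (f ⟨0, by norm_num⟩ j).isLt
      have l1 := (f ⟨1, by norm_num⟩ j).isLt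
      have l2 := (f ⟨2, by norm_num⟩ j).isLt
      omega
    have := hbij.1 heq
    simp [Fin.ext_iff] at this

/-- A Euclidean knight's tour on the chessboard `{0,1}^k` (with `k ≥ 1`) exists iff
`k ≥ 6`; moreover, whenever a tour exists, a closed tour exists. -/
theorem tour_C2_iff (k : ℕ) (hk : 1 ≤ k) :
    (OpenTourC2 k ↔ 6 ≤ k) ∧ (OpenTourC2 k → ClosedTourC2 k) := by
  by_cases h6 : 6 ≤ k
  · exact ⟨⟨fun _ => h6, fun _ => open_of_six h6⟩, fun _ => closed_of_six h6⟩
  · have hno := no_open_small hk (by omega)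
    exact ⟨⟨fun h => absurd h hno, fun h => absurd h (by omega)⟩,
      fun h => absurd h hno⟩
end
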